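/- Scale invariance of the SDG search direction: Let ω > 0 and set g' = ω g and ξ' = ξ / ω (the gradient scales by ω under f ↦ ω f, while the BB-type step length scales by 1/ω, so ξ' g' = ξ g). Then: (a) ρ' := ξ' (1 − ε) = ρ / ω and π' := ⟪g', d⟫ / ‖g'‖² + ε ‖d‖ / ‖g'‖ = π / ω, hence β̂' := ρ' / (ρ' + π') = β̂; (b) the search direction is unchanged: β̂' • d − (1 − β̂') ξ' • g' = β̂ • d − (1 − β̂) ξ • g; and (c) for every β ∈ [0,1], the cosine is unchanged: −⟪g', β • d − (1 − β) ξ' • g'⟫ / (‖g'‖ ‖β • d − (1 − β) ξ' • g'‖) = Φ(β). -/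

import Mathlib

open scoped RealInnerProductSpace

noncomputable def dvec {n : ℕ} (g d : EuclideanSpace ℝ (Fin n)) (ξ β : ℝ) :
    EuclideanSpace ℝ (Fin n) :=
  β • d - ((1 - β) * ξ) • g

noncomputable def Phi {n : ℕ} (g d : EuclideanSpace ℝ (Fin n)) (ξ β : ℝ) : ℝ :=
  -⟪g, dvec g d ξ β⟫ / (‖g‖ * ‖dvec g d ξ β‖)

noncomputable def rho (ξ ε : ℝ) : ℝ := ξ * (1 - ε)

noncomputable def piV {n : ℕ} (g d : EuclideanSpace ℝ (Fin n)) (ε : ℝ) : ℝ :=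
  ⟪g, d⟫ / ‖g‖ ^ 2 + ε * ‖d‖ / ‖g‖

noncomputable def betahat {n : ℕ} (g d : EuclideanSpace ℝ (Fin n)) (ξ ε : ℝ) : ℝ :=
  rho ξ ε / (rho ξ ε + piV g d ε)

/-!
The direction `d(β)` depends on `g` and `ξ` only through `ξ • g`, which the rescaling fixes;
`ρ` and `π` both scale by `1 / ω`, so `β̂ = ρ / (ρ + π)` is unchanged. `Φ(β)` is minus the cosine
of the angle between `g` and `d(β)`, and angles are invariant under positive rescaling.
-/

section ScaleInvariance

variable {n : ℕ} (g d : EuclideanSpace ℝ (Fin n)) (ξ ε : ℝ) {ω : ℝ}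

theorem rho_div (ω : ℝ) : rho (ξ / ω) ε = rho ξ ε / ω := by
  unfold rho
  ring

theorem piV_smul (hω : 0 ≤ ω) : piV (ω • g) d ε = piV g d ε / ω := by
  unfold piV
  rw [real_inner_smul_left, norm_smul, Real.norm_of_nonneg hω]
  rcases hω.eq_or_lt with rfl | hω
  · simp
  · field_simp

theorem betahat_smul_div (hω : 0 < ω) : betahat (ω • g) d (ξ / ω) ε = betahat g d ξ ε := by
  unfold betahat
  rw [rho_div, piV_smul g d ε hω.le, ← add_div, div_div_div_cancel_right₀ hω.ne']

theorem dvec_smul_div (hω : ω ≠ 0) (β : ℝ) : dvec (ω • g) d (ξ / ω) β = dvec g d ξ β := by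
  unfold dvec
  rw [smul_smul]
  congr 2
  field_simp

theorem Phi_eq_neg_cos_angle (β : ℝ) :
    Phi g d ξ β = -Real.cos (InnerProductGeometry.angle g (dvec g d ξ β)) := by
  rw [InnerProductGeometry.cos_angle, Phi, neg_div]

theorem Phi_smul_div (hω : 0 < ω) (β : ℝ) : Phi (ω • g) d (ξ / ω) β = Phi g d ξ β := by
  rw [Phi_eq_neg_cos_angle, Phi_eq_neg_cos_angle, dvec_smul_div g d ξ hω.ne',
    InnerProductGeometry.angle_smul_left_of_pos _ _ hω]

end ScaleInvariance

theorem sdg_scale_invariance_general {n : ℕ} (g d : EuclideanSpace ℝ (Fin n))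
    (ε ξ : ℝ)
    (ω : ℝ) (hω : 0 < ω) :
    (rho (ξ / ω) ε = rho ξ ε / ω ∧
     piV (ω • g) d ε = piV g d ε / ω ∧
     betahat (ω • g) d (ξ / ω) ε = betahat g d ξ ε) ∧
    dvec (ω • g) d (ξ / ω) (betahat (ω • g) d (ξ / ω) ε) =
      dvec g d ξ (betahat g d ξ ε) ∧
    ∀ β ∈ Set.Icc (0 : ℝ) 1, Phi (ω • g) d (ξ / ω) β = Phi g d ξ β := by
  refine ⟨⟨rho_div ξ ε ω, piV_smul g d ε hω.le, betahat_smul_div g d ξ ε hω⟩, ?_,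
    fun β _ => Phi_smul_div g d ξ hω β⟩
  rw [dvec_smul_div g d ξ hω.ne', betahat_smul_div g d ξ ε hω]

/-- Scale invariance of the SDG search direction: with g' = ω g and ξ' = ξ/ω,
(a) ρ' = ρ/ω, π' = π/ω, β̂' = β̂; (b) the search direction is unchanged;
(c) the cosine Φ is unchanged on [0,1]. -/
theorem sdg_scale_invariance {n : ℕ} (g d : EuclideanSpace ℝ (Fin n))
    (hind : LinearIndependent ℝ ![g, d]) (ε ξ : ℝ)
    (hε : ε ∈ Set.Ioo (0 : ℝ) 1) (hξ : 0 < ξ)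
    (ω : ℝ) (hω : 0 < ω) :
    (rho (ξ / ω) ε = rho ξ ε / ω ∧
     piV (ω • g) d ε = piV g d ε / ω ∧
     betahat (ω • g) d (ξ / ω) ε = betahat g d ξ ε) ∧
    dvec (ω • g) d (ξ / ω) (betahat (ω • g) d (ξ / ω) ε) =
      dvec g d ξ (betahat g d ξ ε) ∧
    ∀ β ∈ Set.Icc (0 : ℝ) 1, Phi (ω • g) d (ξ / ω) β = Phi g d ξ β :=
  sdg_scale_invariance_general g d ε ξ ω hω
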